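/- arXiv:2506.16954 — 3 statements merged into one kernel-verified Lean document; each statement's English description precedes it below -/
import Mathlib

section
/- Fix an integer 1 ≤ t ≤ 4 and a real number c > 0. Let γ be a 5-Frenet helix in the de Sitter space form S⁵_t(c): a unit-speed curve with frame F₁ = γ′, F₂, …, F₅ tangent to the quadric, ⟪F_i,F_j⟫_t = ε_iδ_ij (ε_i ∈ {−1,1}), and constant curvatures κ₁, κ₂, κ₃ > 0 and κ₄ ∈ ℝ satisfying the Frenet equations. Then γ is triharmonic (τ₃(γ) = ∇⁵F₁ + R(∇³F₁,F₁)F₁ − R(∇²F₁,∇F₁)F₁ ≡ 0) if and only if both of the following hold: (ε₁κ₁² + ε₃κ₂²)² + ε₂ε₄κ₂²κ₃² = cε₁ε₂(2ε₁κ₁² + ε₃κ₂²) and ε₂(ε₁κ₁² + ε₃κ₂²) + ε₄(ε₃κ₃² + ε₅κ₄²) = cε₁. -/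
open scoped BigOperators

noncomputable section

/-- The pseudo-Euclidean bilinear form of index `t` on `ℝⁿ` (modelled as `Fin n → ℝ`):
`⟪x,y⟫_t = −∑_{i<t} x_i y_i + ∑_{i≥t} x_i y_i`. -/
def pform (t : ℕ) {n : ℕ} (x y : Fin n → ℝ) : ℝ :=
  ∑ i : Fin n, (if i.val < t then -(x i * y i) else x i * y i)

/-- The covariant derivative along `γ` induced on the quadric `⟪x,x⟫_t = 1/c`:
`∇X = X′ − c⟪X′,γ⟫_t γ`. -/
def cov (t : ℕ) {n : ℕ} (c : ℝ) (γ X : ℝ → Fin n → ℝ) : ℝ → Fin n → ℝ :=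
  fun s => deriv X s - (c * pform t (deriv X s) (γ s)) • γ s

/-- The curvature operator of the space form: `R(X,Y)Z = c(⟪Y,Z⟫_t X − ⟪X,Z⟫_t Y)`. -/
def curvOp (t : ℕ) {n : ℕ} (c : ℝ) (X Y Z : Fin n → ℝ) : Fin n → ℝ :=
  c • (pform t Y Z • X - pform t X Z • Y)

/-- The `r`-tension field of a curve `γ` in the space form:
`τ_r(γ) = ∇^{2r−1}T + ∑_{ℓ=0}^{r−2} (−1)^ℓ R(∇^{2r−3−ℓ}T, ∇^ℓT)T` with `T = γ′`. -/
def tensionField (t : ℕ) {n : ℕ} (c : ℝ) (r : ℕ) (γ : ℝ → Fin n → ℝ) (s : ℝ) : Fin n → ℝ :=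
  (cov t c γ)^[2*r-1] (deriv γ) s
    + ∑ ℓ ∈ Finset.range (r-1), ((-1 : ℝ)^ℓ) •
        curvOp t c ((cov t c γ)^[2*r-3-ℓ] (deriv γ) s) ((cov t c γ)^[ℓ] (deriv γ) s) (deriv γ s)

lemma pform_add_left (t : ℕ) {n : ℕ} (x y z : Fin n → ℝ) :
    pform t (x + y) z = pform t x z + pform t y z := by
  unfold pform
  rw [← Finset.sum_add_distrib]
  refine Finset.sum_congr rfl fun i _ => ?_
  by_cases h : i.val < t <;> simp [h] <;> ring

lemma pform_smul_left (t : ℕ) {n : ℕ} (r : ℝ) (x y : Fin n → ℝ) :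
    pform t (r • x) y = r * pform t x y := by
  unfold pform
  rw [Finset.mul_sum]
  refine Finset.sum_congr rfl fun i _ => ?_
  by_cases h : i.val < t <;> simp [h] <;> ring

lemma pform_comm (t : ℕ) {n : ℕ} (x y : Fin n → ℝ) : pform t x y = pform t y x := by
  unfold pform
  refine Finset.sum_congr rfl fun i _ => ?_
  by_cases h : i.val < t <;> simp [h, mul_comm]

lemma pform_zero_left (t : ℕ) {n : ℕ} (y : Fin n → ℝ) : pform t 0 y = 0 := by
  simp [pform]

lemma cov_comb₂ (t : ℕ) (c : ℝ) {I : Set ℝ} (hI : IsOpen I) (γ : ℝ → Fin 6 → ℝ)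
    (X Y₁ Y₂ : ℝ → Fin 6 → ℝ) (c₁ c₂ : ℝ) {s : ℝ} (hs : s ∈ I)
    (hXY : ∀ x ∈ I, X x = c₁ • Y₁ x + c₂ • Y₂ x)
    (h1 : DifferentiableAt ℝ Y₁ s) (h2 : DifferentiableAt ℝ Y₂ s) :
    cov t c γ X s = c₁ • cov t c γ Y₁ s + c₂ • cov t c γ Y₂ s := by
  have hev : X =ᶠ[nhds s] fun x => c₁ • Y₁ x + c₂ • Y₂ x :=
    Filter.eventuallyEq_of_mem (hI.mem_nhds hs) hXY
  have hd : deriv X s = c₁ • deriv Y₁ s + c₂ • deriv Y₂ s := by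
    rw [hev.deriv_eq, deriv_fun_add (f := fun x => c₁ • Y₁ x) (g := fun x => c₂ • Y₂ x)
      (h1.const_smul c₁) (h2.const_smul c₂),
      deriv_fun_const_smul c₁ h1, deriv_fun_const_smul c₂ h2]
  simp only [cov, hd, pform_add_left, pform_smul_left]
  module

lemma cov_comb₃ (t : ℕ) (c : ℝ) {I : Set ℝ} (hI : IsOpen I) (γ : ℝ → Fin 6 → ℝ)
    (X Y₁ Y₂ Y₃ : ℝ → Fin 6 → ℝ) (c₁ c₂ c₃ : ℝ) {s : ℝ} (hs : s ∈ I)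
    (hXY : ∀ x ∈ I, X x = c₁ • Y₁ x + c₂ • Y₂ x + c₃ • Y₃ x)
    (h1 : DifferentiableAt ℝ Y₁ s) (h2 : DifferentiableAt ℝ Y₂ s)
    (h3 : DifferentiableAt ℝ Y₃ s) :
    cov t c γ X s = c₁ • cov t c γ Y₁ s + c₂ • cov t c γ Y₂ s + c₃ • cov t c γ Y₃ s := by
  have hev : X =ᶠ[nhds s] fun x => c₁ • Y₁ x + c₂ • Y₂ x + c₃ • Y₃ x :=
    Filter.eventuallyEq_of_mem (hI.mem_nhds hs) hXY
  have hd : deriv X s = c₁ • deriv Y₁ s + c₂ • deriv Y₂ s + c₃ • deriv Y₃ s := by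
    rw [hev.deriv_eq, deriv_fun_add (f := fun x => c₁ • Y₁ x + c₂ • Y₂ x) (g := fun x => c₃ • Y₃ x)
      ((h1.const_smul c₁).add (h2.const_smul c₂)) (h3.const_smul c₃),
      deriv_fun_add (f := fun x => c₁ • Y₁ x) (g := fun x => c₂ • Y₂ x)
      (h1.const_smul c₁) (h2.const_smul c₂),
      deriv_fun_const_smul c₁ h1, deriv_fun_const_smul c₂ h2, deriv_fun_const_smul c₃ h3]
  simp only [cov, hd, pform_add_left, pform_smul_left]
  module

def TC2 (c ε₁ ε₂ ε₃ ε₄ κ₁ κ₂ κ₃ : ℝ) : ℝ :=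
  (((((ε₂*κ₁)*(-(ε₁*κ₁)))*(ε₂*κ₁)+((ε₂*κ₁)*(ε₃*κ₂))*(-(ε₂*κ₂)))*(-(ε₁*κ₁)))*(ε₂*κ₁)+((((ε₂*κ₁)*(-(ε₁*κ₁)))*(ε₂*κ₁)+((ε₂*κ₁)*(ε₃*κ₂))*(-(ε₂*κ₂)))*(ε₃*κ₂)+(((ε₂*κ₁)*(ε₃*κ₂))*(ε₄*κ₃))*(-(ε₃*κ₃)))*(-(ε₂*κ₂)))+c*ε₁*(((ε₂*κ₁)*(-(ε₁*κ₁)))*(ε₂*κ₁)+((ε₂*κ₁)*(ε₃*κ₂))*(-(ε₂*κ₂)))+c*ε₁*(((ε₂*κ₁)*(-(ε₁*κ₁)))*(ε₂*κ₁))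

def TC4 (c ε₁ ε₂ ε₃ ε₄ ε₅ κ₁ κ₂ κ₃ κ₄ : ℝ) : ℝ :=
  (((((ε₂*κ₁)*(-(ε₁*κ₁)))*(ε₂*κ₁)+((ε₂*κ₁)*(ε₃*κ₂))*(-(ε₂*κ₂)))*(ε₃*κ₂)+(((ε₂*κ₁)*(ε₃*κ₂))*(ε₄*κ₃))*(-(ε₃*κ₃)))*(ε₄*κ₃)+((((ε₂*κ₁)*(ε₃*κ₂))*(ε₄*κ₃))*(ε₅*κ₄))*(-(ε₄*κ₄)))+c*ε₁*(((ε₂*κ₁)*(ε₃*κ₂))*(ε₄*κ₃))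

lemma scalar_iff (c ε₁ ε₂ ε₃ ε₄ ε₅ κ₁ κ₂ κ₃ κ₄ : ℝ)
    (hκ₁ : 0 < κ₁) (hκ₂ : 0 < κ₂) (hκ₃ : 0 < κ₃)
    (hε₁ : ε₁ = 1 ∨ ε₁ = -1) (hε₂ : ε₂ = 1 ∨ ε₂ = -1) (hε₃ : ε₃ = 1 ∨ ε₃ = -1)
    (hε₄ : ε₄ = 1 ∨ ε₄ = -1) (hε₅ : ε₅ = 1 ∨ ε₅ = -1) :
    (TC2 c ε₁ ε₂ ε₃ ε₄ κ₁ κ₂ κ₃ = 0 ∧ TC4 c ε₁ ε₂ ε₃ ε₄ ε₅ κ₁ κ₂ κ₃ κ₄ = 0) ↔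
      ((ε₁ * κ₁ ^ 2 + ε₃ * κ₂ ^ 2) ^ 2 + ε₂ * ε₄ * κ₂ ^ 2 * κ₃ ^ 2 =
          c * ε₁ * ε₂ * (2 * (ε₁ * κ₁ ^ 2) + ε₃ * κ₂ ^ 2) ∧
       ε₂ * (ε₁ * κ₁ ^ 2 + ε₃ * κ₂ ^ 2) + ε₄ * (ε₃ * κ₃ ^ 2 + ε₅ * κ₄ ^ 2) = c * ε₁) := by
  have hm : (0:ℝ) < κ₁ * κ₂ * κ₃ := by positivity
  simp only [TC2, TC4]
  rcases hε₁ with rfl | rfl <;> rcases hε₂ with rfl | rfl <;> rcases hε₃ with rfl | rfl <;>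
    rcases hε₄ with rfl | rfl <;> rcases hε₅ with rfl | rfl <;>
  · constructor
    · rintro ⟨h1, h2⟩
      constructor
      · apply mul_left_cancel₀ (ne_of_gt hκ₁)
        first
          | linear_combination h1
          | linear_combination -h1
      · apply mul_left_cancel₀ (ne_of_gt hm)
        first
          | linear_combination h2
          | linear_combination -h2
    · rintro ⟨h1, h2⟩
      constructor
      · first
          | linear_combination κ₁ * h1
          | linear_combination (-κ₁) * h1
      · first
          | linear_combination (κ₁*κ₂*κ₃) * h2
          | linear_combination (-(κ₁*κ₂*κ₃)) * h2

/-- Triharmonicity conditions for a `5`-Frenet helix in `S⁵_t(c)` (`c > 0`). -/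
theorem stmt_13 (t : ℕ) (ht1 : 1 ≤ t) (ht2 : t ≤ 4) (c : ℝ) (hc : 0 < c)
    (I : Set ℝ) (hIopen : IsOpen I) (hIne : I.Nonempty)
    (γ F₂ F₃ F₄ F₅ : ℝ → Fin 6 → ℝ)
    (hγ : ContDiffOn ℝ (⊤ : ℕ∞) γ I) (hF₂ : ContDiffOn ℝ (⊤ : ℕ∞) F₂ I)
    (hF₃ : ContDiffOn ℝ (⊤ : ℕ∞) F₃ I) (hF₄ : ContDiffOn ℝ (⊤ : ℕ∞) F₄ I) (hF₅ : ContDiffOn ℝ (⊤ : ℕ∞) F₅ I)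
    (ε₁ ε₂ ε₃ ε₄ ε₅ : ℝ)
    (hε₁ : ε₁ = 1 ∨ ε₁ = -1) (hε₂ : ε₂ = 1 ∨ ε₂ = -1) (hε₃ : ε₃ = 1 ∨ ε₃ = -1)
    (hε₄ : ε₄ = 1 ∨ ε₄ = -1) (hε₅ : ε₅ = 1 ∨ ε₅ = -1)
    (κ₁ κ₂ κ₃ κ₄ : ℝ) (hκ₁ : 0 < κ₁) (hκ₂ : 0 < κ₂) (hκ₃ : 0 < κ₃)
    (hquad : ∀ s ∈ I, pform t (γ s) (γ s) = 1 / c)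
    (h11 : ∀ s ∈ I, pform t (deriv γ s) (deriv γ s) = ε₁)
    (h22 : ∀ s ∈ I, pform t (F₂ s) (F₂ s) = ε₂)
    (h33 : ∀ s ∈ I, pform t (F₃ s) (F₃ s) = ε₃)
    (h44 : ∀ s ∈ I, pform t (F₄ s) (F₄ s) = ε₄)
    (h55 : ∀ s ∈ I, pform t (F₅ s) (F₅ s) = ε₅)
    (h12 : ∀ s ∈ I, pform t (deriv γ s) (F₂ s) = 0)
    (h13 : ∀ s ∈ I, pform t (deriv γ s) (F₃ s) = 0)
    (h14 : ∀ s ∈ I, pform t (deriv γ s) (F₄ s) = 0)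
    (h15 : ∀ s ∈ I, pform t (deriv γ s) (F₅ s) = 0)
    (h23 : ∀ s ∈ I, pform t (F₂ s) (F₃ s) = 0)
    (h24 : ∀ s ∈ I, pform t (F₂ s) (F₄ s) = 0)
    (h25 : ∀ s ∈ I, pform t (F₂ s) (F₅ s) = 0)
    (h34 : ∀ s ∈ I, pform t (F₃ s) (F₄ s) = 0)
    (h35 : ∀ s ∈ I, pform t (F₃ s) (F₅ s) = 0)
    (h45 : ∀ s ∈ I, pform t (F₄ s) (F₅ s) = 0)
    (htan2 : ∀ s ∈ I, pform t (F₂ s) (γ s) = 0)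
    (htan3 : ∀ s ∈ I, pform t (F₃ s) (γ s) = 0)
    (htan4 : ∀ s ∈ I, pform t (F₄ s) (γ s) = 0)
    (htan5 : ∀ s ∈ I, pform t (F₅ s) (γ s) = 0)
    (hFr1 : ∀ s ∈ I, cov t c γ (deriv γ) s = (ε₂ * κ₁) • F₂ s)
    (hFr2 : ∀ s ∈ I, cov t c γ F₂ s = (-(ε₁ * κ₁)) • deriv γ s + (ε₃ * κ₂) • F₃ s)
    (hFr3 : ∀ s ∈ I, cov t c γ F₃ s = (-(ε₂ * κ₂)) • F₂ s + (ε₄ * κ₃) • F₄ s)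
    (hFr4 : ∀ s ∈ I, cov t c γ F₄ s = (-(ε₃ * κ₃)) • F₃ s + (ε₅ * κ₄) • F₅ s)
    (hFr5 : ∀ s ∈ I, cov t c γ F₅ s = (-(ε₄ * κ₄)) • F₄ s) :
    (∀ s ∈ I, tensionField t c 3 γ s = 0) ↔
      ((ε₁ * κ₁ ^ 2 + ε₃ * κ₂ ^ 2) ^ 2 + ε₂ * ε₄ * κ₂ ^ 2 * κ₃ ^ 2 =
          c * ε₁ * ε₂ * (2 * (ε₁ * κ₁ ^ 2) + ε₃ * κ₂ ^ 2) ∧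
       ε₂ * (ε₁ * κ₁ ^ 2 + ε₃ * κ₂ ^ 2) + ε₄ * (ε₃ * κ₃ ^ 2 + ε₅ * κ₄ ^ 2) = c * ε₁) := by
  obtain ⟨s₀, hs₀⟩ := hIne
  have hTd : ContDiffOn ℝ (⊤ : ℕ∞) (deriv γ) I := hγ.deriv_of_isOpen hIopen (by simp)
  have dT : ∀ s ∈ I, DifferentiableAt ℝ (deriv γ) s := fun s hs =>
    (hTd.differentiableOn (by simp)).differentiableAt (hIopen.mem_nhds hs)
  have dF₂ : ∀ s ∈ I, DifferentiableAt ℝ F₂ s := fun s hs =>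
    (hF₂.differentiableOn (by simp)).differentiableAt (hIopen.mem_nhds hs)
  have dF₃ : ∀ s ∈ I, DifferentiableAt ℝ F₃ s := fun s hs =>
    (hF₃.differentiableOn (by simp)).differentiableAt (hIopen.mem_nhds hs)
  have dF₄ : ∀ s ∈ I, DifferentiableAt ℝ F₄ s := fun s hs =>
    (hF₄.differentiableOn (by simp)).differentiableAt (hIopen.mem_nhds hs)
  have dF₅ : ∀ s ∈ I, DifferentiableAt ℝ F₅ s := fun s hs =>
    (hF₅.differentiableOn (by simp)).differentiableAt (hIopen.mem_nhds hs)
  have claim1 : ∀ s ∈ I, (cov t c γ)^[1] (deriv γ) s = (ε₂*κ₁) • F₂ s := by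
    intro s hs
    simpa using hFr1 s hs
  have claim2 : ∀ s ∈ I, (cov t c γ)^[2] (deriv γ) s =
      ((ε₂*κ₁)*(-(ε₁*κ₁))) • deriv γ s + ((ε₂*κ₁)*(ε₃*κ₂)) • F₃ s := by
    intro s hs
    rw [Function.iterate_succ_apply']
    rw [cov_comb₂ t c hIopen γ ((cov t c γ)^[1] (deriv γ)) F₂ F₂ (ε₂*κ₁) 0 hs
      (fun x hx => by rw [claim1 x hx]; module) (dF₂ s hs) (dF₂ s hs)]
    rw [hFr2 s hs]
    module
  have claim3 : ∀ s ∈ I, (cov t c γ)^[3] (deriv γ) s =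
      (((ε₂*κ₁)*(-(ε₁*κ₁)))*(ε₂*κ₁)+((ε₂*κ₁)*(ε₃*κ₂))*(-(ε₂*κ₂))) • F₂ s + (((ε₂*κ₁)*(ε₃*κ₂))*(ε₄*κ₃)) • F₄ s := by
    intro s hs
    rw [Function.iterate_succ_apply']
    rw [cov_comb₂ t c hIopen γ ((cov t c γ)^[2] (deriv γ)) (deriv γ) F₃ ((ε₂*κ₁)*(-(ε₁*κ₁))) ((ε₂*κ₁)*(ε₃*κ₂)) hs
      (fun x hx => claim2 x hx) (dT s hs) (dF₃ s hs)]
    rw [hFr1 s hs, hFr3 s hs]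
    module
  have claim4 : ∀ s ∈ I, (cov t c γ)^[4] (deriv γ) s =
      ((((ε₂*κ₁)*(-(ε₁*κ₁)))*(ε₂*κ₁)+((ε₂*κ₁)*(ε₃*κ₂))*(-(ε₂*κ₂)))*(-(ε₁*κ₁))) • deriv γ s + ((((ε₂*κ₁)*(-(ε₁*κ₁)))*(ε₂*κ₁)+((ε₂*κ₁)*(ε₃*κ₂))*(-(ε₂*κ₂)))*(ε₃*κ₂)+(((ε₂*κ₁)*(ε₃*κ₂))*(ε₄*κ₃))*(-(ε₃*κ₃))) • F₃ s + ((((ε₂*κ₁)*(ε₃*κ₂))*(ε₄*κ₃))*(ε₅*κ₄)) • F₅ s := by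
    intro s hs
    rw [Function.iterate_succ_apply']
    rw [cov_comb₂ t c hIopen γ ((cov t c γ)^[3] (deriv γ)) F₂ F₄ (((ε₂*κ₁)*(-(ε₁*κ₁)))*(ε₂*κ₁)+((ε₂*κ₁)*(ε₃*κ₂))*(-(ε₂*κ₂))) (((ε₂*κ₁)*(ε₃*κ₂))*(ε₄*κ₃)) hs
      (fun x hx => claim3 x hx) (dF₂ s hs) (dF₄ s hs)]
    rw [hFr2 s hs, hFr4 s hs]
    module
  have claim5 : ∀ s ∈ I, (cov t c γ)^[5] (deriv γ) s =
      (((((ε₂*κ₁)*(-(ε₁*κ₁)))*(ε₂*κ₁)+((ε₂*κ₁)*(ε₃*κ₂))*(-(ε₂*κ₂)))*(-(ε₁*κ₁)))*(ε₂*κ₁)+((((ε₂*κ₁)*(-(ε₁*κ₁)))*(ε₂*κ₁)+((ε₂*κ₁)*(ε₃*κ₂))*(-(ε₂*κ₂)))*(ε₃*κ₂)+(((ε₂*κ₁)*(ε₃*κ₂))*(ε₄*κ₃))*(-(ε₃*κ₃)))*(-(ε₂*κ₂))) • F₂ s + (((((ε₂*κ₁)*(-(ε₁*κ₁)))*(ε₂*κ₁)+((ε₂*κ₁)*(ε₃*κ₂))*(-(ε₂*κ₂)))*(ε₃*κ₂)+(((ε₂*κ₁)*(ε₃*κ₂))*(ε₄*κ₃))*(-(ε₃*κ₃)))*(ε₄*κ₃)+((((ε₂*κ₁)*(ε₃*κ₂))*(ε₄*κ₃))*(ε₅*κ₄))*(-(ε₄*κ₄)))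 • F₄ s := by
    intro s hs
    rw [Function.iterate_succ_apply']
    rw [cov_comb₃ t c hIopen γ ((cov t c γ)^[4] (deriv γ)) (deriv γ) F₃ F₅ ((((ε₂*κ₁)*(-(ε₁*κ₁)))*(ε₂*κ₁)+((ε₂*κ₁)*(ε₃*κ₂))*(-(ε₂*κ₂)))*(-(ε₁*κ₁))) ((((ε₂*κ₁)*(-(ε₁*κ₁)))*(ε₂*κ₁)+((ε₂*κ₁)*(ε₃*κ₂))*(-(ε₂*κ₂)))*(ε₃*κ₂)+(((ε₂*κ₁)*(ε₃*κ₂))*(ε₄*κ₃))*(-(ε₃*κ₃))) ((((ε₂*κ₁)*(ε₃*κ₂))*(ε₄*κ₃))*(ε₅*κ₄)) hs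
      (fun x hx => claim4 x hx) (dT s hs) (dF₃ s hs) (dF₅ s hs)]
    rw [hFr1 s hs, hFr3 s hs, hFr5 s hs]
    module
  have hmain : ∀ s ∈ I, tensionField t c 3 γ s =
      TC2 c ε₁ ε₂ ε₃ ε₄ κ₁ κ₂ κ₃ • F₂ s + TC4 c ε₁ ε₂ ε₃ ε₄ ε₅ κ₁ κ₂ κ₃ κ₄ • F₄ s := by
    intro s hs
    have z12 : pform t (F₂ s) (deriv γ s) = 0 := by rw [pform_comm]; exact h12 s hs
    have z13 : pform t (F₃ s) (deriv γ s) = 0 := by rw [pform_comm]; exact h13 s hs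
    have z14 : pform t (F₄ s) (deriv γ s) = 0 := by rw [pform_comm]; exact h14 s hs
    have e1 := claim1 s hs
    have e2 := claim2 s hs
    have e3 := claim3 s hs
    have e5 := claim5 s hs
    show (cov t c γ)^[5] (deriv γ) s
        + (((-1:ℝ)^0) • curvOp t c ((cov t c γ)^[3] (deriv γ) s)
            ((cov t c γ)^[0] (deriv γ) s) (deriv γ s)
          + (((-1:ℝ)^1) • curvOp t c ((cov t c γ)^[2] (deriv γ) s)
            ((cov t c γ)^[1] (deriv γ) s) (deriv γ s) + 0)) = _
    rw [e5, e3, e2, e1]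
    simp only [Function.iterate_zero, id_eq, pow_zero, pow_one, curvOp,
      pform_add_left, pform_smul_left, z12, z13, z14, h11 s hs, TC2, TC4]
    module
  rw [← scalar_iff c ε₁ ε₂ ε₃ ε₄ ε₅ κ₁ κ₂ κ₃ κ₄ hκ₁ hκ₂ hκ₃ hε₁ hε₂ hε₃ hε₄ hε₅]
  constructor
  · intro htau
    have h0 : TC2 c ε₁ ε₂ ε₃ ε₄ κ₁ κ₂ κ₃ • F₂ s₀ + TC4 c ε₁ ε₂ ε₃ ε₄ ε₅ κ₁ κ₂ κ₃ κ₄ • F₄ s₀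
        = 0 := by rw [← hmain s₀ hs₀]; exact htau s₀ hs₀
    have z42 : pform t (F₄ s₀) (F₂ s₀) = 0 := by rw [pform_comm]; exact h24 s₀ hs₀
    have hA : TC2 c ε₁ ε₂ ε₃ ε₄ κ₁ κ₂ κ₃ * ε₂ = 0 := by
      have := congrArg (fun v => pform t v (F₂ s₀)) h0
      simpa [pform_add_left, pform_smul_left, h22 s₀ hs₀, z42, pform_zero_left] using this
    have hB : TC4 c ε₁ ε₂ ε₃ ε₄ ε₅ κ₁ κ₂ κ₃ κ₄ * ε₄ = 0 := by
      have := congrArg (fun v => pform t v (F₄ s₀)) h0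
      simpa [pform_add_left, pform_smul_left, h44 s₀ hs₀, h24 s₀ hs₀, pform_zero_left]
        using this
    have hε₂0 : ε₂ ≠ 0 := by rcases hε₂ with rfl | rfl <;> norm_num
    have hε₄0 : ε₄ ≠ 0 := by rcases hε₄ with rfl | rfl <;> norm_num
    exact ⟨(mul_eq_zero.mp hA).resolve_right hε₂0,
      (mul_eq_zero.mp hB).resolve_right hε₄0⟩
  · rintro ⟨hA, hB⟩ s hs
    rw [hmain s hs, hA, hB]
    simp
end
end

section
/- Let I ⊆ ℝ be an open interval, m ≥ 1, and let T, N, B : I → ℝ^m be smooth maps. Let ε₁, ε₂, ε₃ ∈ {−1,1} and let κ, τ > 0 be constants, and suppose the Frenet helix equations hold on I: T′ = ε₂κN, N′ = −ε₁κT + ε₃τB, B′ = −ε₂τN. Then, for every integer ℓ ≥ 0, the iterated derivatives of T satisfy T^{(2ℓ)} = 𝒜_ℓT + ℬ_ℓB and T^{(2ℓ+1)} = 𝒞_ℓN, where 𝒜₀ = 1, ℬ₀ = 0, 𝒞_ℓ = (−1)^ℓ ε₂^{ℓ+1} κ(ε₁κ² + ε₃τ²)^ℓ for all ℓ ≥ 0,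 and for ℓ ≥ 1: 𝒜_ℓ = (−1)^ℓ ε₁ε₂^ℓ κ²(ε₁κ² + ε₃τ²)^{ℓ−1} and ℬ_ℓ = −(−1)^ℓ ε₃ε₂^ℓ κτ(ε₁κ² + ε₃τ²)^{ℓ−1}. (This is the flat-space case of the lemma computing ∇_T^{2ℓ}T and ∇_T^{2ℓ+1}T for a 3-Frenet helix in a semi-Riemannian manifold, since in pseudo-Euclidean space the covariant derivative along a curve is ordinary differentiation.) -/
open scoped BigOperators

noncomputable section

/-- Closed formulas for the even and odd iterated derivatives of the tangent
field `T` of a `3`-Frenet helix in flat pseudo-Euclidean space. -/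
theorem stmt_15 (m : ℕ) (hm : 1 ≤ m)
    (I : Set ℝ) (hIopen : IsOpen I)
    (T N Bf : ℝ → Fin m → ℝ)
    (hT : ContDiffOn ℝ (⊤ : ℕ∞) T I) (hN : ContDiffOn ℝ (⊤ : ℕ∞) N I) (hB : ContDiffOn ℝ (⊤ : ℕ∞) Bf I)
    (ε₁ ε₂ ε₃ : ℝ) (hε₁ : ε₁ = 1 ∨ ε₁ = -1) (hε₂ : ε₂ = 1 ∨ ε₂ = -1) (hε₃ : ε₃ = 1 ∨ ε₃ = -1)
    (κ τ : ℝ) (hκ : 0 < κ) (hτ : 0 < τ)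
    (hFr1 : ∀ s ∈ I, deriv T s = (ε₂ * κ) • N s)
    (hFr2 : ∀ s ∈ I, deriv N s = (-(ε₁ * κ)) • T s + (ε₃ * τ) • Bf s)
    (hFr3 : ∀ s ∈ I, deriv Bf s = (-(ε₂ * τ)) • N s) :
    ∀ ℓ : ℕ, ∀ s ∈ I,
      iteratedDeriv (2 * ℓ) T s =
        (if ℓ = 0 then (1 : ℝ)
          else (-1) ^ ℓ * ε₁ * ε₂ ^ ℓ * κ ^ 2 * (ε₁ * κ ^ 2 + ε₃ * τ ^ 2) ^ (ℓ - 1)) • T s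
        + (if ℓ = 0 then (0 : ℝ)
          else -((-1) ^ ℓ) * ε₃ * ε₂ ^ ℓ * κ * τ * (ε₁ * κ ^ 2 + ε₃ * τ ^ 2) ^ (ℓ - 1)) • Bf s
      ∧ iteratedDeriv (2 * ℓ + 1) T s =
          ((-1) ^ ℓ * ε₂ ^ (ℓ + 1) * κ * (ε₁ * κ ^ 2 + ε₃ * τ ^ 2) ^ ℓ) • N s := by
  have hdT : ∀ s ∈ I, DifferentiableAt ℝ T s := fun s hs =>
    (hT.contDiffAt (hIopen.mem_nhds hs)).differentiableAt (by simp)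
  have hdN : ∀ s ∈ I, DifferentiableAt ℝ N s := fun s hs =>
    (hN.contDiffAt (hIopen.mem_nhds hs)).differentiableAt (by simp)
  have hdB : ∀ s ∈ I, DifferentiableAt ℝ Bf s := fun s hs =>
    (hB.contDiffAt (hIopen.mem_nhds hs)).differentiableAt (by simp)
  have key : ∀ f g : ℝ → Fin m → ℝ, (∀ x ∈ I, f x = g x) →
      ∀ s ∈ I, deriv f s = deriv g s := by
    intro f g h s hs
    exact Filter.EventuallyEq.deriv_eq (Filter.eventuallyEq_of_mem (hIopen.mem_nhds hs) h)
  intro ℓ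
  induction ℓ with
  | zero =>
    intro s hs
    constructor
    · norm_num [iteratedDeriv_zero]
    · have : (2 * 0 + 1 : ℕ) = 1 := by norm_num
      rw [this, iteratedDeriv_one, hFr1 s hs]
      match_scalars; ring
  | succ ℓ ih =>
    have heven : ∀ s ∈ I, iteratedDeriv (2 * (ℓ + 1)) T s =
        ((-1) ^ (ℓ+1) * ε₁ * ε₂ ^ (ℓ+1) * κ ^ 2 * (ε₁ * κ ^ 2 + ε₃ * τ ^ 2) ^ ℓ) • T s
        + (-((-1) ^ (ℓ+1)) * ε₃ * ε₂ ^ (ℓ+1) * κ * τ * (ε₁ * κ ^ 2 + ε₃ * τ ^ 2) ^ ℓ) • Bf s := by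
      intro s hs
      have h1 : 2 * (ℓ + 1) = (2 * ℓ + 1) + 1 := by ring
      rw [h1, iteratedDeriv_succ]
      rw [key (iteratedDeriv (2 * ℓ + 1) T)
        (fun x => ((-1) ^ ℓ * ε₂ ^ (ℓ + 1) * κ * (ε₁ * κ ^ 2 + ε₃ * τ ^ 2) ^ ℓ) • N x)
        (fun x hx => (ih x hx).2) s hs]
      rw [deriv_fun_const_smul _ (hdN s hs), hFr2 s hs]
      match_scalars <;> ring
    intro s hs
    refine ⟨by simpa using heven s hs, ?_⟩
    rw [iteratedDeriv_succ]
    rw [key (iteratedDeriv (2 * (ℓ + 1)) T)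
      (fun x => ((-1) ^ (ℓ+1) * ε₁ * ε₂ ^ (ℓ+1) * κ ^ 2 * (ε₁ * κ ^ 2 + ε₃ * τ ^ 2) ^ ℓ) • T x
        + (-((-1) ^ (ℓ+1)) * ε₃ * ε₂ ^ (ℓ+1) * κ * τ * (ε₁ * κ ^ 2 + ε₃ * τ ^ 2) ^ ℓ) • Bf x)
      heven s hs]
    rw [deriv_fun_add ((hdT s hs).fun_const_smul _) ((hdB s hs).fun_const_smul _),
      deriv_fun_const_smul _ (hdT s hs), deriv_fun_const_smul _ (hdB s hs),
      hFr1 s hs, hFr3 s hs]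
    match_scalars; ring
end
end

section
/- Let c > 0 and m ≥ 4. Let α : ℝ → S^{m−1}(c) be a 3-Frenet helix in the round sphere with constant curvatures κ_α, τ_α > 0. Fix ε₁ ∈ {−1,1} and d₁ ∈ ℝ with d₁ ≠ 0 and ε₁ + d₁² > 0, set d₂ = √(ε₁ + d₁²), and define the unit-speed curve γ(s) = (d₁s, α(d₂s)) in M_c (so ⟪γ′,γ′⟫ = ε₁). Assume τ_α² − ε₁d₁²κ_α² ≠ 0 and set ε₃ = sign(τ_α² − ε₁d₁²κ_α²). Then there exist smooth fields N, B along γ tangent to M_c such that {T = γ′, N, B} is ⟪,⟫-orthonormal with ⟪N,N⟫ = 1 and ⟪B,B⟫ = ε₃, and the Frenet helix equations ∇T = κN, ∇N = −ε₁κT + ε₃τB, ∇B = −τN hold with the constant curvatures κ = (ε₁ + d₁²)κ_α and τ = √(ε₃(ε₁ + d₁²)(τ_α² − ε₁d₁²κ_α²)). Moreover ε₁κ² + ε₃τ² = (ε₁ + d₁²)(κ_α² + τ_α²) ≠ 0. -/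
open scoped BigOperators

noncomputable section

/-- Spatial projection `π(x₀,x₁,…,x_m) = (0,x₁,…,x_m)` on `ℝ^{m+1}`. -/
def proj {m : ℕ} (x : Fin (m+1) → ℝ) : Fin (m+1) → ℝ :=
  fun i => if i = 0 then 0 else x i

/-- Covariant derivative along `γ` induced on the Lorentzian hypersurface
`M_c = {x : ∑_{i≥1} x_i² = 1/c}`: `∇X = X′ − c⟪X′, π∘γ⟫ (π∘γ)`. -/
def covM {m : ℕ} (c : ℝ) (γ X : ℝ → Fin (m+1) → ℝ) : ℝ → Fin (m+1) → ℝ :=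
  fun s => deriv X s - (c * pform 1 (deriv X s) (proj (γ s))) • proj (γ s)

lemma pform_smul_right (t : ℕ) {n : ℕ} (r : ℝ) (x y : Fin n → ℝ) :
    pform t x (r • y) = r * pform t x y := by
  rw [pform_comm, pform_smul_left, pform_comm]

lemma pform_add_right (t : ℕ) {n : ℕ} (x y z : Fin n → ℝ) :
    pform t x (y + z) = pform t x y + pform t x z := by
  rw [pform_comm, pform_add_left, pform_comm t x y, pform_comm t x z]

lemma pform_one_cons {m : ℕ} (a b : ℝ) (v w : Fin m → ℝ) :
    pform 1 (Fin.cons a v) (Fin.cons b w) = -(a * b) + pform 0 v w := by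
  unfold pform
  rw [Fin.sum_univ_succ]
  simp

lemma proj_cons {m : ℕ} (a : ℝ) (v : Fin m → ℝ) :
    proj (Fin.cons a v) = Fin.cons 0 v := by
  funext i
  refine Fin.cases ?_ (fun j => ?_) i <;> simp [proj, Fin.succ_ne_zero]

lemma hasDerivAt_cons {m : ℕ} {f : ℝ → ℝ} {g : ℝ → Fin m → ℝ} {f' : ℝ} {g' : Fin m → ℝ} {s : ℝ}
    (hf : HasDerivAt f f' s) (hg : HasDerivAt g g' s) :
    HasDerivAt (fun u => (Fin.cons (f u) (g u) : Fin (m+1) → ℝ)) (Fin.cons f' g') s := by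
  rw [hasDerivAt_pi]
  intro i
  refine Fin.cases ?_ (fun j => ?_) i
  · simpa using hf
  · simpa using (hasDerivAt_pi.mp hg j)

lemma contDiff_cons {m : ℕ} {f : ℝ → ℝ} {g : ℝ → Fin m → ℝ}
    (hf : ContDiff ℝ (⊤ : ℕ∞) f) (hg : ContDiff ℝ (⊤ : ℕ∞) g) :
    ContDiff ℝ (⊤ : ℕ∞) (fun u => (Fin.cons (f u) (g u) : Fin (m+1) → ℝ)) := by
  rw [contDiff_pi]
  intro i
  refine Fin.cases ?_ (fun j => ?_) i
  · simpa using hf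
  · simpa using (contDiff_pi.mp hg j)

lemma hasDerivAt_pform {t n : ℕ} {f g : ℝ → Fin n → ℝ} {f' g' : Fin n → ℝ} {s : ℝ}
    (hf : HasDerivAt f f' s) (hg : HasDerivAt g g' s) :
    HasDerivAt (fun u => pform t (f u) (g u)) (pform t f' (g s) + pform t (f s) g') s := by
  have h : ∀ i : Fin n, HasDerivAt
      (fun u => if i.val < t then -(f u i * g u i) else f u i * g u i)
      (if i.val < t then -(f' i * g s i + f s i * g' i) else f' i * g s i + f s i * g' i) s := by
    intro i
    have hfi := hasDerivAt_pi.mp hf i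
    have hgi := hasDerivAt_pi.mp hg i
    have hmul := hfi.fun_mul hgi
    split
    · simpa using hmul.fun_neg
    · simpa using hmul
  have hsum := HasDerivAt.fun_sum (fun i (_ : i ∈ Finset.univ) => h i)
  have heq : (pform t f' (g s) + pform t (f s) g') =
      ∑ i : Fin n, (if i.val < t then -(f' i * g s i + f s i * g' i)
        else f' i * g s i + f s i * g' i) := by
    unfold pform
    rw [← Finset.sum_add_distrib]
    refine Finset.sum_congr rfl fun i _ => ?_
    split <;> ring
  rw [heq]
  exact hsum

lemma deriv_pform_const {t n : ℕ} {f g : ℝ → Fin n → ℝ} {f' g' : Fin n → ℝ} {s : ℝ} {k : ℝ}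
    (hf : HasDerivAt f f' s) (hg : HasDerivAt g g' s)
    (h : ∀ u, pform t (f u) (g u) = k) :
    pform t f' (g s) + pform t (f s) g' = 0 := by
  have h1 := hasDerivAt_pform (t := t) hf hg
  have h2 : HasDerivAt (fun u => pform t (f u) (g u)) 0 s := by
    rw [show (fun u => pform t (f u) (g u)) = (fun _ => k) from funext h]
    exact hasDerivAt_const s k
  exact h1.unique h2

/-- The curve `γ(s) = (d₁s, α(d₂s))` built from a `3`-Frenet helix `α` of the
round sphere is a `3`-Frenet helix of the Lorentzian product `M_c ≅ ℝ × S^{m−1}(c)` with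
space-like normal, `ε₃ = sign(τ_α² − ε₁d₁²κ_α²)`, and constant curvatures
`κ = (ε₁+d₁²)κ_α`, `τ = √(ε₃(ε₁+d₁²)(τ_α² − ε₁d₁²κ_α²))`; moreover
`ε₁κ² + ε₃τ² = (ε₁+d₁²)(κ_α²+τ_α²) ≠ 0`. -/
theorem stmt_18 (m : ℕ) (hm : 4 ≤ m) (c : ℝ) (hc : 0 < c)
    (α Nα Bα : ℝ → Fin m → ℝ)
    (hα : ContDiff ℝ (⊤ : ℕ∞) α) (hNα : ContDiff ℝ (⊤ : ℕ∞) Nα) (hBα : ContDiff ℝ (⊤ : ℕ∞) Bα)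
    (hsph : ∀ s, pform 0 (α s) (α s) = 1 / c)
    (hunitα : ∀ s, pform 0 (deriv α s) (deriv α s) = 1)
    (hNαn : ∀ s, pform 0 (Nα s) (Nα s) = 1)
    (hBαn : ∀ s, pform 0 (Bα s) (Bα s) = 1)
    (hTNα : ∀ s, pform 0 (deriv α s) (Nα s) = 0)
    (hTBα : ∀ s, pform 0 (deriv α s) (Bα s) = 0)
    (hNBα : ∀ s, pform 0 (Nα s) (Bα s) = 0)
    (hNαtan : ∀ s, pform 0 (Nα s) (α s) = 0)
    (hBαtan : ∀ s, pform 0 (Bα s) (α s) = 0)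
    (κα τα : ℝ) (hκα : 0 < κα) (hτα : 0 < τα)
    (hFα1 : ∀ s, cov 0 c α (deriv α) s = κα • Nα s)
    (hFα2 : ∀ s, cov 0 c α Nα s = (-κα) • deriv α s + τα • Bα s)
    (hFα3 : ∀ s, cov 0 c α Bα s = (-τα) • Nα s)
    (ε₁ d₁ d₂ : ℝ) (hε₁ : ε₁ = 1 ∨ ε₁ = -1) (hd₁ : d₁ ≠ 0)
    (hpos : 0 < ε₁ + d₁ ^ 2) (hd₂ : d₂ = Real.sqrt (ε₁ + d₁ ^ 2))
    (γ : ℝ → Fin (m+1) → ℝ)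
    (hγdef : γ = fun s => Fin.cons (d₁ * s) (α (d₂ * s)))
    (hnz : τα ^ 2 - ε₁ * d₁ ^ 2 * κα ^ 2 ≠ 0)
    (ε₃ : ℝ) (hε₃ : ε₃ = Real.sign (τα ^ 2 - ε₁ * d₁ ^ 2 * κα ^ 2)) :
    ∃ κ τ : ℝ,
      κ = (ε₁ + d₁ ^ 2) * κα ∧
      τ = Real.sqrt (ε₃ * (ε₁ + d₁ ^ 2) * (τα ^ 2 - ε₁ * d₁ ^ 2 * κα ^ 2)) ∧
      (∃ N B : ℝ → Fin (m+1) → ℝ,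
        ContDiff ℝ (⊤ : ℕ∞) N ∧ ContDiff ℝ (⊤ : ℕ∞) B ∧
        (∀ s, pform 1 (N s) (proj (γ s)) = 0) ∧
        (∀ s, pform 1 (B s) (proj (γ s)) = 0) ∧
        (∀ s, pform 1 (N s) (N s) = 1) ∧
        (∀ s, pform 1 (B s) (B s) = ε₃) ∧
        (∀ s, pform 1 (deriv γ s) (N s) = 0) ∧
        (∀ s, pform 1 (deriv γ s) (B s) = 0) ∧
        (∀ s, pform 1 (N s) (B s) = 0) ∧
        (∀ s, covM c γ (deriv γ) s = κ • N s) ∧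
        (∀ s, covM c γ N s = (-(ε₁ * κ)) • deriv γ s + (ε₃ * τ) • B s) ∧
        (∀ s, covM c γ B s = (-τ) • N s)) ∧
      ε₁ * κ ^ 2 + ε₃ * τ ^ 2 = (ε₁ + d₁ ^ 2) * (κα ^ 2 + τα ^ 2) ∧
      (ε₁ + d₁ ^ 2) * (κα ^ 2 + τα ^ 2) ≠ 0 := by
  subst hγdef
  -- scalar facts
  have hε₁sq : ε₁ ^ 2 = 1 := by rcases hε₁ with h | h <;> rw [h] <;> norm_num
  have hd₂sq : d₂ ^ 2 = ε₁ + d₁ ^ 2 := by rw [hd₂, Real.sq_sqrt hpos.le]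
  have hd₂pos : 0 < d₂ := by rw [hd₂]; exact Real.sqrt_pos.mpr hpos
  have hε₃Δ : 0 < ε₃ * (τα ^ 2 - ε₁ * d₁ ^ 2 * κα ^ 2) := by
    rw [hε₃]; exact Real.sign_mul_pos_of_ne_zero _ hnz
  have hε₃sq : ε₃ ^ 2 = 1 := by
    rcases lt_or_gt_of_ne hnz with h | h
    · rw [hε₃, Real.sign_of_neg h]; norm_num
    · rw [hε₃, Real.sign_of_pos h]; norm_num
  set κ := (ε₁ + d₁ ^ 2) * κα with hκ
  set τ := Real.sqrt (ε₃ * (ε₁ + d₁ ^ 2) * (τα ^ 2 - ε₁ * d₁ ^ 2 * κα ^ 2)) with hτ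
  have hτsq : τ ^ 2 = ε₃ * (ε₁ + d₁ ^ 2) * (τα ^ 2 - ε₁ * d₁ ^ 2 * κα ^ 2) := by
    rw [hτ]; exact Real.sq_sqrt (by nlinarith)
  have hτpos : 0 < τ := by rw [hτ]; exact Real.sqrt_pos.mpr (by nlinarith)
  have hτne : τ ≠ 0 := hτpos.ne'
  -- differentiability
  have hαd : Differentiable ℝ α := hα.differentiable (by simp)
  have hα' : ContDiff ℝ (⊤ : ℕ∞) (deriv α) := by
    have h := (contDiff_succ_iff_deriv (n := ((⊤ : ℕ∞) : WithTop ℕ∞))).mp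
      (by rw [show (((⊤ : ℕ∞) : WithTop ℕ∞) + 1) = ((⊤ : ℕ∞) : WithTop ℕ∞) from rfl]; exact hα)
    exact h.2.2
  have hα'd : Differentiable ℝ (deriv α) := hα'.differentiable (by simp)
  have hNαd : Differentiable ℝ Nα := hNα.differentiable (by simp)
  have hBαd : Differentiable ℝ Bα := hBα.differentiable (by simp)
  have Hα : ∀ u, HasDerivAt α (deriv α u) u := fun u => (hαd u).hasDerivAt
  have Hα' : ∀ u, HasDerivAt (deriv α) (deriv (deriv α) u) u := fun u => (hα'd u).hasDerivAt
  have HNα : ∀ u, HasDerivAt Nα (deriv Nα u) u := fun u => (hNαd u).hasDerivAt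
  have HBα : ∀ u, HasDerivAt Bα (deriv Bα u) u := fun u => (hBαd u).hasDerivAt
  -- sphere identities
  have hTα0 : ∀ u, pform 0 (deriv α u) (α u) = 0 := by
    intro u
    have h := deriv_pform_const (Hα u) (Hα u) hsph
    have h2 := pform_comm 0 (α u) (deriv α u)
    linarith
  have hA2 : ∀ u, pform 0 (deriv (deriv α) u) (α u) = -1 := by
    intro u
    have h := deriv_pform_const (Hα' u) (Hα u) hTα0
    linarith [hunitα u]
  have hN0 : ∀ u, pform 0 (deriv Nα u) (α u) = 0 := by
    intro u
    have h := deriv_pform_const (HNα u) (Hα u) hNαtan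
    have h2 := pform_comm 0 (Nα u) (deriv α u)
    linarith [hTNα u]
  have hB0 : ∀ u, pform 0 (deriv Bα u) (α u) = 0 := by
    intro u
    have h := deriv_pform_const (HBα u) (Hα u) hBαtan
    have h2 := pform_comm 0 (Bα u) (deriv α u)
    linarith [hTBα u]
  have hNT : ∀ u, pform 0 (Nα u) (deriv α u) = 0 := fun u => by
    rw [pform_comm]; exact hTNα u
  have hBT : ∀ u, pform 0 (Bα u) (deriv α u) = 0 := fun u => by
    rw [pform_comm]; exact hTBα u
  have hBN : ∀ u, pform 0 (Bα u) (Nα u) = 0 := fun u => by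
    rw [pform_comm]; exact hNBα u
  -- Frenet equations componentwise
  have E1 : ∀ u (j : Fin m), deriv (deriv α) u j = κα * Nα u j - c * α u j := by
    intro u j
    have h := hFα1 u
    simp only [cov] at h
    rw [hA2 u] at h
    have h3 := congrFun h j
    simp only [Pi.sub_apply, Pi.smul_apply, smul_eq_mul] at h3
    linarith
  have E2 : ∀ u (j : Fin m), deriv Nα u j = -(κα * deriv α u j) + τα * Bα u j := by
    intro u j
    have h := hFα2 u
    simp only [cov] at h
    rw [hN0 u] at h
    have h3 := congrFun h j
    simp only [Pi.sub_apply, Pi.add_apply, Pi.smul_apply, smul_eq_mul] at h3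
    linarith
  have E3 : ∀ u (j : Fin m), deriv Bα u j = -(τα * Nα u j) := by
    intro u j
    have h := hFα3 u
    simp only [cov] at h
    rw [hB0 u] at h
    have h3 := congrFun h j
    simp only [Pi.sub_apply, Pi.smul_apply, smul_eq_mul] at h3
    linarith
  -- chain rule helper
  have hlin : ∀ s : ℝ, HasDerivAt (fun u => d₂ * u) d₂ s := by
    intro s
    simpa using (hasDerivAt_id s).const_mul d₂
  have Hcomp : ∀ (F F' : ℝ → Fin m → ℝ), (∀ u, HasDerivAt F (F' u) u) →
      ∀ s : ℝ, HasDerivAt (fun u => F (d₂ * u)) (d₂ • F' (d₂ * s)) s := by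
    intro F F' hF s
    simpa [Function.comp_def] using (hF (d₂ * s)).scomp s (hlin s)
  -- derivative of γ
  have HT : ∀ s, HasDerivAt (fun u => (Fin.cons (d₁ * u) (α (d₂ * u)) : Fin (m+1) → ℝ))
      (Fin.cons d₁ (d₂ • deriv α (d₂ * s))) s := by
    intro s
    refine hasDerivAt_cons ?_ (Hcomp α (deriv α) Hα s)
    simpa using (hasDerivAt_id s).const_mul d₁
  have hderivγ : (deriv fun u => (Fin.cons (d₁ * u) (α (d₂ * u)) : Fin (m+1) → ℝ))
      = fun s => Fin.cons d₁ (d₂ • deriv α (d₂ * s)) := funext fun s => (HT s).deriv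
  -- second derivative of γ
  have hderivT : ∀ s, deriv (fun u => (Fin.cons d₁ (d₂ • deriv α (d₂ * u)) : Fin (m+1) → ℝ)) s
      = Fin.cons 0 ((d₂ * d₂) • deriv (deriv α) (d₂ * s)) := by
    intro s
    refine HasDerivAt.deriv ?_
    refine hasDerivAt_cons (hasDerivAt_const s d₁) ?_
    simpa [smul_smul] using (Hcomp (deriv α) (deriv (deriv α)) Hα' s).fun_const_smul d₂
  -- derivative of N
  have hderivN : ∀ s, deriv (fun u => (Fin.cons 0 (Nα (d₂ * u)) : Fin (m+1) → ℝ)) s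
      = Fin.cons 0 (d₂ • deriv Nα (d₂ * s)) := by
    intro s
    exact (hasDerivAt_cons (hasDerivAt_const s 0) (Hcomp Nα (deriv Nα) HNα s)).deriv
  -- derivative of B
  have hderivB : ∀ s, deriv (fun u => (Fin.cons (ε₃ / τ * (ε₁ * d₁ * d₂ ^ 2 * κα))
        ((ε₃ / τ * (ε₁ * d₁ ^ 2 * d₂ * κα)) • deriv α (d₂ * u)
          + (ε₃ / τ * (d₂ * τα)) • Bα (d₂ * u)) : Fin (m+1) → ℝ)) s
      = Fin.cons 0 ((ε₃ / τ * (ε₁ * d₁ ^ 2 * d₂ * κα) * d₂) • deriv (deriv α) (d₂ * s)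
          + (ε₃ / τ * (d₂ * τα) * d₂) • deriv Bα (d₂ * s)) := by
    intro s
    refine HasDerivAt.deriv ?_
    refine hasDerivAt_cons (hasDerivAt_const s _) ?_
    have h1 := (Hcomp (deriv α) (deriv (deriv α)) Hα' s).const_smul (ε₃ / τ * (ε₁ * d₁ ^ 2 * d₂ * κα))
    have h2 := (Hcomp Bα (deriv Bα) HBα s).const_smul (ε₃ / τ * (d₂ * τα))
    have h3 := h1.add h2
    have e1 : (ε₃ / τ * (ε₁ * d₁ ^ 2 * d₂ * κα)) • d₂ • deriv (deriv α) (d₂ * s)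
        = (ε₃ / τ * (ε₁ * d₁ ^ 2 * d₂ * κα) * d₂) • deriv (deriv α) (d₂ * s) := by
      rw [smul_smul]
    have e2 : (ε₃ / τ * (d₂ * τα)) • d₂ • deriv Bα (d₂ * s)
        = (ε₃ / τ * (d₂ * τα) * d₂) • deriv Bα (d₂ * s) := by
      rw [smul_smul]
    rw [e1, e2] at h3
    exact h3
  -- smoothness
  have hmul : ContDiff ℝ (⊤ : ℕ∞) (fun u : ℝ => d₂ * u) := contDiff_const.mul contDiff_id
  -- main construction
  refine ⟨κ, τ, rfl, rfl, ⟨fun s => Fin.cons 0 (Nα (d₂ * s)),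
    fun s => Fin.cons (ε₃ / τ * (ε₁ * d₁ * d₂ ^ 2 * κα))
      ((ε₃ / τ * (ε₁ * d₁ ^ 2 * d₂ * κα)) • deriv α (d₂ * s)
        + (ε₃ / τ * (d₂ * τα)) • Bα (d₂ * s)),
    ?_, ?_, ?_, ?_, ?_, ?_, ?_, ?_, ?_, ?_, ?_, ?_⟩, ?_, ?_⟩
  · exact contDiff_cons contDiff_const (hNα.comp hmul)
  · exact contDiff_cons contDiff_const
      (((hα'.comp hmul).const_smul _).add ((hBα.comp hmul).const_smul _))
  · intro s
    simp [proj_cons, pform_one_cons, hNαtan]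
  · intro s
    simp [proj_cons, pform_one_cons, pform_add_left, pform_smul_left, hTα0, hBαtan]
  · intro s
    simp [pform_one_cons, hNαn]
  · intro s
    simp only [pform_one_cons, pform_add_left, pform_add_right, pform_smul_left,
      pform_smul_right, hunitα, hBαn, hTBα, hBT, hBN, hNBα]
    field_simp
    linear_combination (ε₃ ^ 2 * d₂ ^ 2 * (-d₁ ^ 2 * d₂ ^ 2 * κα ^ 2 + d₁ ^ 4 * κα ^ 2)) * hε₁sq + (ε₃ ^ 2 * (τα ^ 2 - ε₁ * d₁ ^ 2 * κα ^ 2) - ε₃ ^ 2 * d₂ ^ 2 * d₁ ^ 2 * κα ^ 2) * hd₂sq + (-ε₃) * hτsq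
  · intro s
    rw [hderivγ]
    simp [pform_one_cons, pform_smul_left, pform_smul_right, hTNα]
  · intro s
    rw [hderivγ]
    simp only [pform_one_cons, pform_add_right, pform_smul_left, pform_smul_right,
      hunitα, hTBα]
    field_simp
    ring
  · intro s
    simp [pform_one_cons, pform_add_right, pform_smul_right, hNT, hNBα]
  · intro s
    rw [hderivγ]
    simp only [covM, hderivT, proj_cons, pform_one_cons, pform_smul_left, hA2]
    funext i
    refine Fin.cases ?_ (fun j => ?_) i
    · simp
    · simp only [Pi.sub_apply, Pi.smul_apply, Fin.cons_succ, Fin.cons_zero, smul_eq_mul, E1]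
      rw [hκ, ← hd₂sq]
      ring
  · intro s
    rw [hderivγ]
    simp only [covM, hderivN, proj_cons, pform_one_cons, pform_smul_left, hN0]
    funext i
    refine Fin.cases ?_ (fun j => ?_) i
    · simp only [Pi.sub_apply, Pi.add_apply, Pi.smul_apply, Fin.cons_zero, smul_eq_mul]
      field_simp
      linear_combination ((-1) * ε₁ * d₁ * d₂ ^ 2 * κα) * hε₃sq + ((-1) * ε₁ * d₁ * κα) * hd₂sq + (ε₁ * d₁) * hκ
    · simp only [Pi.sub_apply, Pi.add_apply, Pi.smul_apply, Fin.cons_succ, smul_eq_mul, E2]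
      field_simp
      linear_combination (d₂ * κα * deriv α (d₂ * s) j) * hε₁sq + ((-1) * d₂ * τα * Bα (d₂ * s) j + (-1) * ε₁ * d₁ ^ 2 * d₂ * κα * deriv α (d₂ * s) j) * hε₃sq + (ε₁ * d₂ * deriv α (d₂ * s) j) * hκ
  · intro s
    simp only [covM, hderivB, proj_cons, pform_one_cons, pform_add_left, pform_smul_left,
      hA2, hB0]
    funext i
    refine Fin.cases ?_ (fun j => ?_) i
    · simp
    · simp only [Pi.sub_apply, Pi.add_apply, Pi.smul_apply, Fin.cons_succ, Fin.cons_zero,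
        smul_eq_mul, E1, E3]
      field_simp
      linear_combination ((-1) * ε₃ * τα ^ 2 * Nα (d₂ * s) j + ε₁ * ε₃ * d₁ ^ 2 * κα ^ 2 * Nα (d₂ * s) j) * hd₂sq + (Nα (d₂ * s) j) * hτsq
  · rw [hκ, hτsq]
    linear_combination ((ε₁ + d₁ ^ 2) * (τα ^ 2 - ε₁ * d₁ ^ 2 * κα ^ 2)) * hε₃sq + ((ε₁ + d₁ ^ 2) * κα ^ 2) * hε₁sq
  · exact ne_of_gt (mul_pos hpos (add_pos (pow_pos hκα 2) (pow_pos hτα 2)))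
end
end
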